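/- Let ε denote the empty permutation, and let A be either ∅ or {(0,0)}. For every mesh pattern p with ε^A ≤ p in the mesh pattern poset: μ(ε^A, p) = 1 if p = ε^A; μ(ε^A, p) = −1 if A = ∅ and |cl(p)| + |sh(p)| = 1; and μ(ε^A, p) = 0 otherwise. In particular ε^{(0,0)} is contained in no mesh pattern other than itself. -/

import Mathlib

/-!
# The poset of mesh patterns

A mesh pattern is a permutation of `{1, ..., len}` together with a set of shaded
boxes in the `(len+1) × (len+1)` grid (boxes are indexed by their south-west corner,
so boxes have coordinates in `{0, ..., len} × {0, ..., len}`).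

We normalise the permutation as a function `ℕ → ℕ` (using 1-based indexing) which is
`0` outside of `[1, len]`; this makes equality of mesh patterns coincide with equality
of the underlying data.
-/

structure MeshPattern where
  len : ℕ
  perm : ℕ → ℕ
  sh : Finset (ℕ × ℕ)
  perm_mem : ∀ i, 1 ≤ i → i ≤ len → 1 ≤ perm i ∧ perm i ≤ len
  perm_zero : ∀ i, i = 0 ∨ len < i → perm i = 0
  perm_inj : ∀ i j, 1 ≤ i → i ≤ len → 1 ≤ j → j ≤ len → perm i = perm j → i = j
  perm_surj : ∀ v, 1 ≤ v → v ≤ len → ∃ i, 1 ≤ i ∧ i ≤ len ∧ perm i = v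
  sh_mem : ∀ q ∈ sh, q.1 ≤ len ∧ q.2 ≤ len

namespace MeshPattern

/-- The (1-based) position of the value `v` in the underlying permutation of `m`. -/
noncomputable def pos (m : MeshPattern) (v : ℕ) : ℕ := Function.invFun m.perm v

/-- The dimension of a mesh pattern: length of the permutation plus number of shaded boxes. -/
def dim (m : MeshPattern) : ℕ := m.len + m.sh.card

/-- Given (the position map of an occurrence) `η` of `m` in `p`, the extended column
boundary map: pattern column boundary `i` (for `0 ≤ i ≤ m.len + 1`) is sent to the
corresponding column boundary in `p`.  Boxes of `p` with first coordinate `a` satisfying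
`colExt m p η i ≤ a < colExt m p η (i+1)` are exactly the boxes lying horizontally
within the region corresponding to pattern boxes with first coordinate `i`. -/
def colExt (m p : MeshPattern) (η : ℕ → ℕ) (i : ℕ) : ℕ :=
  if i = 0 then 0 else if i ≤ m.len then η i else p.len + 1

/-- The analogous extended row (value) boundary map. -/
noncomputable def valExt (m p : MeshPattern) (η : ℕ → ℕ) (j : ℕ) : ℕ :=
  if j = 0 then 0 else if j ≤ m.len then p.perm (η (m.pos j)) else p.len + 1

/-- The box `(a, b)` of `p` lies in the region `R_η(i, j)` of the box `(i, j)` of `m`. -/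
def inRegion (m p : MeshPattern) (η : ℕ → ℕ) (i j a b : ℕ) : Prop :=
  colExt m p η i ≤ a ∧ a < colExt m p η (i + 1) ∧
    valExt m p η j ≤ b ∧ b < valExt m p η (j + 1)

/-- The point of `p` at position `y` lies in the open interior of the region `R_η(i, j)`. -/
def interiorPt (m p : MeshPattern) (η : ℕ → ℕ) (i j y : ℕ) : Prop :=
  colExt m p η i < y ∧ y < colExt m p η (i + 1) ∧
    valExt m p η j < p.perm y ∧ p.perm y < valExt m p η (j + 1)

/-- `η` is an occurrence of the mesh pattern `m` in the mesh pattern `p`: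
a (normalised) strictly increasing choice of positions realising the underlying
classical pattern, such that for every shaded box of `m` the corresponding region of `p`
contains no point of `p` in its interior and consists entirely of shaded boxes of `p`. -/
structure IsOcc (m p : MeshPattern) (η : ℕ → ℕ) : Prop where
  zero : ∀ i, i = 0 ∨ m.len < i → η i = 0
  mem : ∀ i, 1 ≤ i → i ≤ m.len → 1 ≤ η i ∧ η i ≤ p.len
  mono : ∀ i j, 1 ≤ i → i < j → j ≤ m.len → η i < η j
  pattern : ∀ i j, 1 ≤ i → i ≤ m.len → 1 ≤ j → j ≤ m.len →
    (m.perm i < m.perm j ↔ p.perm (η i) < p.perm (η j))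
  no_point : ∀ q ∈ m.sh, ∀ y, 1 ≤ y → y ≤ p.len → ¬ interiorPt m p η q.1 q.2 y
  shaded : ∀ q ∈ m.sh, ∀ a b, inRegion m p η q.1 q.2 a b → (a, b) ∈ p.sh

/-- The mesh pattern poset: `m ≤ p` iff there is an occurrence of `m` in `p`. -/
instance : LE MeshPattern := ⟨fun m p => ∃ η, IsOcc m p η⟩

instance : LT MeshPattern := ⟨fun m p => m ≤ p ∧ m ≠ p⟩

/-- `b` covers `a` in the mesh pattern poset. -/
def CovByM (a b : MeshPattern) : Prop := a < b ∧ ¬ ∃ z, a < z ∧ z < b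

open Classical in
/-- The Möbius function of a (locally finite) partial order `r`, computed with a fuel
parameter: `muFuel r n a b` is the Möbius function `μ(a, b)` provided `n` is at least the
length of the longest chain from `a` to `b` (with the convention `μ(a, b) = 0` if
`¬ r a b`). -/
noncomputable def muFuel {α : Type*} (r : α → α → Prop) : ℕ → α → α → ℤ
  | 0, a, b => if a = b then 1 else 0
  | n + 1, a, b =>
      if a = b then 1
      else if r a b then - ∑ᶠ c ∈ {c | r a c ∧ r c b ∧ c ≠ b}, muFuel r n a c
      else 0

/-- The Möbius function of the mesh pattern poset.  Since every chain from `m` to `p` has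
length at most `dim p`, the fuel `dim p + 1` is sufficient, so this is the genuine Möbius
function: `mu m m = 1`, `mu m p = -∑_{m ≤ c < p} mu m c` for `m < p`, and `mu m p = 0`
when `m ≰ p`. -/
noncomputable def mu (m p : MeshPattern) : ℤ := muFuel (· ≤ ·) (p.dim + 1) m p

/-- The classical permutation poset `𝓟`, realised as the subposet of unshaded mesh
patterns (for unshaded patterns, mesh occurrence is exactly classical pattern
containment).  Its Möbius function. -/
noncomputable def muP (σ π : {m : MeshPattern // m.sh = ∅}) : ℤ :=
  muFuel (· ≤ ·) (π.1.len + 1) σ π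

/-- The mesh pattern with underlying identity permutation of length `n`
and shaded boxes `s`. -/
def ofId (n : ℕ) (s : Finset (ℕ × ℕ)) (hs : ∀ q ∈ s, q.1 ≤ n ∧ q.2 ≤ n) : MeshPattern where
  len := n
  perm := fun i => if 1 ≤ i ∧ i ≤ n then i else 0
  sh := s
  perm_mem := by intro i h1 h2; (try dsimp only); rw [if_pos ⟨h1, h2⟩]; omega
  perm_zero := by intro i h; (try dsimp only); rw [if_neg]; omega
  perm_inj := by intro i j h1 h2 h3 h4 h; (try dsimp only at h); rw [if_pos ⟨h1, h2⟩, if_pos ⟨h3, h4⟩] at h; omega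
  perm_surj := by
    intro v h1 h2; exact ⟨v, h1, h2, by (try dsimp only); rw [if_pos ⟨h1, h2⟩]⟩
  sh_mem := hs

/-- The mesh pattern with underlying decreasing permutation of length `n`
and shaded boxes `s`. -/
def ofRev (n : ℕ) (s : Finset (ℕ × ℕ)) (hs : ∀ q ∈ s, q.1 ≤ n ∧ q.2 ≤ n) : MeshPattern where
  len := n
  perm := fun i => if 1 ≤ i ∧ i ≤ n then n + 1 - i else 0
  sh := s
  perm_mem := by intro i h1 h2; (try dsimp only); rw [if_pos ⟨h1, h2⟩]; omega
  perm_zero := by intro i h; (try dsimp only); rw [if_neg]; omega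
  perm_inj := by intro i j h1 h2 h3 h4 h; (try dsimp only at h); rw [if_pos ⟨h1, h2⟩, if_pos ⟨h3, h4⟩] at h; omega
  perm_surj := by
    intro v h1 h2
    exact ⟨n + 1 - v, by omega, by omega, by (try dsimp only); rw [if_pos ⟨by omega, by omega⟩]; omega⟩
  sh_mem := hs

/-- The unshaded singleton mesh pattern `1^∅`. -/
def one0 : MeshPattern := ofId 1 ∅ (by simp)

/-- The empty mesh pattern `ε^∅`. -/
def eps0 : MeshPattern := ofId 0 ∅ (by simp)

/-- The empty mesh pattern `ε^{(0,0)}` with its single box shaded. -/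
def eps00 : MeshPattern := ofId 0 {(0, 0)} (by decide)

/-- The singleton mesh patterns `1^{(a,b)}` for `a b ∈ {0,1}`. -/
def one00 : MeshPattern := ofId 1 {(0, 0)} (by decide)
def one10 : MeshPattern := ofId 1 {(1, 0)} (by decide)
def one01 : MeshPattern := ofId 1 {(0, 1)} (by decide)
def one11 : MeshPattern := ofId 1 {(1, 1)} (by decide)

/-- The mesh pattern `21^{(0,0),(1,0)}`. -/
def pat21 : MeshPattern := ofRev 2 {(0, 0), (1, 0)} (by decide)

/-- Replace the shading of `p` by a subset `A ⊆ sh p` (same underlying permutation):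
this is the mesh pattern `(cl p)^A`. -/
def reshade (p : MeshPattern) (A : Finset (ℕ × ℕ)) (hA : A ⊆ p.sh) : MeshPattern :=
  { p with sh := A, sh_mem := fun q hq => p.sh_mem q (hA hq) }

/-- The occurrence `η` of `s` in `p` uses the shaded box `(a, b) ∈ sh p`. -/
def UsesBox (s p : MeshPattern) (η : ℕ → ℕ) (a b : ℕ) : Prop :=
  (a, b) ∈ p.sh ∧ ∃ i j, (i, j) ∈ s.sh ∧ inRegion s p η i j a b

/-- The position map of the occurrence of `p − x` in `p` avoiding the point at
position `x`. -/
def etaDel (p : MeshPattern) (x : ℕ) : ℕ → ℕ := fun i =>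
  if 1 ≤ i ∧ i ≤ p.len - 1 then (if i < x then i else i + 1) else 0

/-- The underlying permutation of the pattern obtained from `p` by deleting the point at
position `x`. -/
def delPerm (p : MeshPattern) (x : ℕ) : ℕ → ℕ := fun i =>
  if 1 ≤ i ∧ i ≤ p.len - 1 then
    (if p.perm (etaDel p x i) < p.perm x then p.perm (etaDel p x i)
     else p.perm (etaDel p x i) - 1)
  else 0

/-- `q` is the mesh pattern `p − x` obtained from `p` by deleting the point at position
`x` (where `1 ≤ x ≤ len p`): the underlying permutation is obtained by deleting that
letter, and a box of `q` is shaded exactly when the corresponding region of `p` (under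
the occurrence `etaDel p x`) is entirely shaded and contains no point of `p` in its
interior.  In particular `etaDel p x` is an occurrence of `q` in `p`. -/
def IsDeletion (p : MeshPattern) (x : ℕ) (q : MeshPattern) : Prop :=
  1 ≤ x ∧ x ≤ p.len ∧ q.len + 1 = p.len ∧ q.perm = delPerm p x ∧
    ∀ i j : ℕ, ((i, j) ∈ q.sh ↔ i ≤ q.len ∧ j ≤ q.len ∧
      (∀ a b, inRegion q p (etaDel p x) i j a b → (a, b) ∈ p.sh) ∧
      ∀ y, 1 ≤ y → y ≤ p.len → ¬ interiorPt q p (etaDel p x) i j y)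

/-- Deleting the point at position `x` of `p` (with `q = p − x`) merges shadings:
some shaded box of `q` corresponds to more than one shaded box of `p`. -/
def MergesShadings (p : MeshPattern) (x : ℕ) (q : MeshPattern) : Prop :=
  ∃ i j, (i, j) ∈ q.sh ∧ ∃ a b a' b', (a, b) ≠ (a', b') ∧ (a, b) ∈ p.sh ∧
    (a', b') ∈ p.sh ∧ inRegion q p (etaDel p x) i j a b ∧
    inRegion q p (etaDel p x) i j a' b'

/-- `f 0 ⋖ f 1 ⋖ ⋯ ⋖ f k` is a maximal chain of length `k` from `a` to `b`. -/
def IsMaxChain (a b : MeshPattern) (k : ℕ) (f : ℕ → MeshPattern) : Prop :=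
  f 0 = a ∧ f k = b ∧ ∀ i < k, CovByM (f i) (f (i + 1))

/-- Underlying permutation of the direct sum `s ⊕ t`. -/
def dsumPerm (s t : MeshPattern) : ℕ → ℕ := fun i =>
  if i ≤ s.len then s.perm i
  else if i ≤ s.len + t.len then t.perm (i - s.len) + s.len
  else 0

/-- Shading of the direct sum `s ⊕ t`: the shadings of `s` and of `t` (translated), where
boxes on the shared boundary are extended to the new boundary (north/east for boxes of
`s`, south/west for boxes of `t`). -/
def dsumSh (s t : MeshPattern) : Finset (ℕ × ℕ) :=
  s.sh ∪ t.sh.image (fun q => (q.1 + s.len, q.2 + s.len)) ∪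
    (s.sh.filter (fun q => q.2 = s.len)).biUnion
      (fun q => (Finset.range (t.len + 1)).image (fun k => (q.1, s.len + k))) ∪
    (s.sh.filter (fun q => q.1 = s.len)).biUnion
      (fun q => (Finset.range (t.len + 1)).image (fun k => (s.len + k, q.2))) ∪
    (t.sh.filter (fun q => q.2 = 0)).biUnion
      (fun q => (Finset.range (s.len + 1)).image (fun k => (q.1 + s.len, k))) ∪
    (t.sh.filter (fun q => q.1 = 0)).biUnion
      (fun q => (Finset.range (s.len + 1)).image (fun k => (k, q.2 + s.len)))

/-- `r = s ⊕ t` is the direct sum of the mesh patterns `s` and `t` (defined when the top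
right corner box of `s` and the bottom left corner box of `t` are not shaded). -/
def IsDSum (s t r : MeshPattern) : Prop :=
  (s.len, s.len) ∉ s.sh ∧ (0, 0) ∉ t.sh ∧
    r.len = s.len + t.len ∧ r.perm = dsumPerm s t ∧ r.sh = dsumSh s t

/-- A mesh pattern is indecomposable if it cannot be written as a direct sum `a ⊕ b`
with neither `a` nor `b` equal to it. -/
def Indecomposable (m : MeshPattern) : Prop :=
  ¬ ∃ s t, s ≠ m ∧ t ≠ m ∧ IsDSum s t m

/-- `SumOfList L m`: `m` is the direct sum of the list `L` of mesh patterns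
(the empty list summing to the empty pattern `ε^∅`). -/
def SumOfList : List MeshPattern → MeshPattern → Prop
  | [], m => m.len = 0 ∧ m.sh = ∅
  | [a], m => a = m
  | a :: b :: rest, m => ∃ r, SumOfList (b :: rest) r ∧ IsDSum a r m

/-- Underlying permutation of the skew sum `s ⊖ t`. -/
def sksumPerm (s t : MeshPattern) : ℕ → ℕ := fun i =>
  if i = 0 then 0
  else if i ≤ s.len then s.perm i + t.len
  else if i ≤ s.len + t.len then t.perm (i - s.len)
  else 0

/-- Shading of the skew sum `s ⊖ t` (s placed to the north west of `t`), with boxes on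
the shared boundary extended to the new boundary. -/
def sksumSh (s t : MeshPattern) : Finset (ℕ × ℕ) :=
  s.sh.image (fun q => (q.1, q.2 + t.len)) ∪ t.sh.image (fun q => (q.1 + s.len, q.2)) ∪
    (s.sh.filter (fun q => q.1 = s.len)).biUnion
      (fun q => (Finset.range (t.len + 1)).image (fun k => (s.len + k, q.2 + t.len))) ∪
    (s.sh.filter (fun q => q.2 = 0)).biUnion
      (fun q => (Finset.range (t.len + 1)).image (fun k => (q.1, k))) ∪
    (t.sh.filter (fun q => q.2 = t.len)).biUnion
      (fun q => (Finset.range (s.len + 1)).image (fun k => (q.1 + s.len, t.len + k))) ∪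
    (t.sh.filter (fun q => q.1 = 0)).biUnion
      (fun q => (Finset.range (s.len + 1)).image (fun k => (k, q.2)))

/-- `r = s ⊖ t` is the skew sum of the mesh patterns `s` and `t` (defined when the bottom
right corner box of `s` and the top left corner box of `t` are not shaded). -/
def IsSkewSum (s t r : MeshPattern) : Prop :=
  (s.len, 0) ∉ s.sh ∧ (0, t.len) ∉ t.sh ∧
    r.len = s.len + t.len ∧ r.perm = sksumPerm s t ∧ r.sh = sksumSh s t

/-- A mesh pattern is skew-indecomposable if it cannot be written as a skew sum `a ⊖ b`
with neither `a` nor `b` equal to it. -/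
def SkewIndecomposable (m : MeshPattern) : Prop :=
  ¬ ∃ s t, s ≠ m ∧ t ≠ m ∧ IsSkewSum s t m

/-- Connectivity (zig-zag of comparabilities) inside a subset `I` of the mesh pattern
poset. -/
def ConnIn (I : Set MeshPattern) (a b : MeshPattern) : Prop :=
  Relation.ReflTransGen (fun u v => u ∈ I ∧ v ∈ I ∧ (u ≤ v ∨ v ≤ u)) a b

/-- The interval `[m, p]` is strongly disconnected: its open interior has at least two
connected components each containing more than one element. -/
def StronglyDisconnectedInterval (m p : MeshPattern) : Prop :=
  ∃ a b, (m < a ∧ a < p) ∧ (m < b ∧ b < p) ∧ ¬ ConnIn {c | m < c ∧ c < p} a b ∧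
    (∃ a', (m < a' ∧ a' < p) ∧ a' ≠ a ∧ ConnIn {c | m < c ∧ c < p} a a') ∧
    (∃ b', (m < b' ∧ b' < p) ∧ b' ≠ b ∧ ConnIn {c | m < c ∧ c < p} b b')

/-- The occurrence of `m` in `m ⊕ m` (or `m ⊖ m`) as the first `|m|` points. -/
def eta1 (m : MeshPattern) : ℕ → ℕ := fun i => if 1 ≤ i ∧ i ≤ m.len then i else 0

/-- The occurrence of `m` in `m ⊕ m` (or `m ⊖ m`) as the last `|m|` points. -/
def eta2 (m : MeshPattern) : ℕ → ℕ := fun i => if 1 ≤ i ∧ i ≤ m.len then i + m.len else 0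

/-- `i` (with `2 ≤ i ≤ len`) is the position of an adjacency tail: the letter at
position `i` differs by one from the letter at position `i - 1`. -/
def IsAdjTail (m : MeshPattern) (i : ℕ) : Prop :=
  2 ≤ i ∧ i ≤ m.len ∧ (m.perm i = m.perm (i - 1) + 1 ∨ m.perm (i - 1) = m.perm i + 1)

open Classical in
/-- `adj(cl m)`: the number of adjacency tails of the underlying permutation of `m`. -/
noncomputable def adjCount (m : MeshPattern) : ℕ :=
  ((Finset.range (m.len + 1)).filter (fun i => IsAdjTail m i)).card

/-- The total number of mesh patterns of length `n`. -/
def Tcount (n : ℕ) : ℕ := n.factorial * 2 ^ ((n + 1) ^ 2)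

end MeshPattern

/-- Binary words, partially ordered by (not necessarily contiguous) subword containment:
the poset `𝓦`. -/
structure Word where
  toList : List Bool

instance : LE Word := ⟨fun u w => u.toList.Sublist w.toList⟩

/-- The binary word associated to a mesh pattern `m` in the class `Γ`: it has length
`|m| - 1`, and for each letter `i` with `2 ≤ i ≤ |m|` the corresponding entry is
`false` (i.e. `0`) if the letter `i` appears before the letter `1` in `cl m`,
and `true` (i.e. `1`) otherwise. -/
noncomputable def MeshPattern.wordOf (m : MeshPattern) : List Bool :=
  (List.range (m.len - 1)).map (fun k => if m.pos (k + 2) < m.pos 1 then false else true)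
/-!
The dimension `|cl p| + |sh p|` is strictly monotone on the mesh pattern poset: an occurrence
of `m` in `p` sends the shaded boxes of `m` injectively to shaded boxes of `p`, and when `m` and
`p` have the same dimension the occurrence is the identity. Hence the only patterns of dimension
at most one are `ε^∅`, `1^∅` and `ε^{(0,0)}`, and the last lies below nothing but itself: its
shaded box covers all of `p`, so `p` has no points. Below a pattern of dimension at least two the
only nonzero terms of the Möbius recursion are then `μ(ε^∅, ε^∅) = 1` and `μ(ε^∅, 1^∅) = -1`.
-/

namespace MeshPattern

theorem ext {m p : MeshPattern} (hlen : m.len = p.len) (hperm : m.perm = p.perm)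
    (hsh : m.sh = p.sh) : m = p := by
  cases m; cases p
  simp only at hlen hperm hsh
  subst hlen hperm hsh
  rfl

theorem eq_of_len_eq_zero {m p : MeshPattern} (hm : m.len = 0) (hp : p.len = 0)
    (hsh : m.sh = p.sh) : m = p :=
  ext (hm.trans hp.symm)
    (funext fun i => by rw [m.perm_zero i (by omega), p.perm_zero i (by omega)]) hsh

theorem sh_subset_singleton_of_len_eq_zero {m : MeshPattern} (h : m.len = 0) :
    m.sh ⊆ {(0, 0)} := by
  intro q hq
  have := m.sh_mem q hq
  exact Finset.mem_singleton.mpr (Prod.ext (by omega) (by omega))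

theorem dim_le_one_of_len_eq_zero {m : MeshPattern} (h : m.len = 0) : m.dim ≤ 1 := by
  have := Finset.card_le_card (sh_subset_singleton_of_len_eq_zero h)
  rw [Finset.card_singleton] at this
  unfold dim
  omega

theorem pos_spec (m : MeshPattern) {v : ℕ} (h1 : 1 ≤ v) (h2 : v ≤ m.len) :
    1 ≤ m.pos v ∧ m.pos v ≤ m.len ∧ m.perm (m.pos v) = v := by
  obtain ⟨i, -, -, hi⟩ := m.perm_surj v h1 h2
  have hv : m.perm (m.pos v) = v := Function.invFun_eq ⟨i, hi⟩
  by_contra hout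
  have := m.perm_zero (m.pos v) (by omega)
  omega

theorem card_filter_perm_lt (m : MeshPattern) {i : ℕ} (h1 : 1 ≤ i) (h2 : i ≤ m.len) :
    ((Finset.Icc 1 m.len).filter (fun j => m.perm j < m.perm i)).card = m.perm i - 1 := by
  have hv := m.perm_mem i h1 h2
  rw [show m.perm i - 1 = (Finset.Icc 1 (m.perm i - 1)).card by rw [Nat.card_Icc]; omega]
  apply Finset.card_bij (fun j _ => m.perm j)
  · intro j hj
    simp only [Finset.mem_filter, Finset.mem_Icc] at hj ⊢
    have := m.perm_mem j hj.1.1 hj.1.2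
    omega
  · intro j hj j' hj' he
    simp only [Finset.mem_filter, Finset.mem_Icc] at hj hj'
    exact m.perm_inj j j' hj.1.1 hj.1.2 hj'.1.1 hj'.1.2 he
  · intro v hv'
    simp only [Finset.mem_Icc] at hv'
    obtain ⟨j, hj1, hj2, hj3⟩ := m.perm_surj v hv'.1 (by omega)
    exact ⟨j, by simp only [Finset.mem_filter, Finset.mem_Icc]; omega, hj3⟩

theorem perm_eq_of_lt_iff {m p : MeshPattern} (hlen : m.len = p.len)
    (h : ∀ i j, 1 ≤ i → i ≤ m.len → 1 ≤ j → j ≤ m.len →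
      (m.perm j < m.perm i ↔ p.perm j < p.perm i)) :
    m.perm = p.perm := by
  funext i
  by_cases hi : 1 ≤ i ∧ i ≤ m.len
  · have hm := card_filter_perm_lt m hi.1 hi.2
    have hp := card_filter_perm_lt p hi.1 (hlen ▸ hi.2)
    rw [← hlen, ← Finset.filter_congr fun j hj => h i j hi.1 hi.2
      (Finset.mem_Icc.mp hj).1 (Finset.mem_Icc.mp hj).2, hm] at hp
    have := (m.perm_mem i hi.1 hi.2).1
    have := (p.perm_mem i hi.1 (hlen ▸ hi.2)).1
    omega
  · rw [m.perm_zero i (by omega), p.perm_zero i (by omega)]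

namespace IsOcc

variable {m p : MeshPattern} {η : ℕ → ℕ}

theorem add_le_apply (h : IsOcc m p η) {i : ℕ} (hi : 1 ≤ i) :
    ∀ t, i + t ≤ m.len → η i + t ≤ η (i + t)
  | 0, _ => le_rfl
  | t + 1, ht => by
    have := add_le_apply h hi t (by omega)
    have := h.mono (i + t) (i + t + 1) (by omega) (by omega) (by omega)
    show η i + (t + 1) ≤ η (i + t + 1)
    omega

theorem le_apply (h : IsOcc m p η) {i : ℕ} (h1 : 1 ≤ i) (h2 : i ≤ m.len) : i ≤ η i := by
  have := h.add_le_apply le_rfl (i - 1) (by omega)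
  rw [show 1 + (i - 1) = i by omega] at this
  have := (h.mem 1 le_rfl (by omega)).1
  omega

theorem len_le (h : IsOcc m p η) : m.len ≤ p.len := by
  rcases Nat.eq_zero_or_pos m.len with h0 | h0
  · omega
  · have := h.le_apply h0 le_rfl
    have := (h.mem m.len h0 le_rfl).2
    omega

theorem apply_eq_self (h : IsOcc m p η) (hlen : m.len = p.len) {i : ℕ} (h1 : 1 ≤ i)
    (h2 : i ≤ m.len) : η i = i := by
  have := h.add_le_apply h1 (m.len - i) (by omega)
  rw [show i + (m.len - i) = m.len by omega] at this
  have := (h.mem m.len (by omega) le_rfl).2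
  have := h.le_apply h1 h2
  omega

theorem perm_apply_pos_mem (h : IsOcc m p η) {v : ℕ} (h1 : 1 ≤ v) (h2 : v ≤ m.len) :
    1 ≤ p.perm (η (m.pos v)) ∧ p.perm (η (m.pos v)) ≤ p.len := by
  obtain ⟨hp1, hp2, -⟩ := m.pos_spec h1 h2
  have := h.mem _ hp1 hp2
  exact p.perm_mem _ this.1 this.2

theorem colExt_strictMonoOn (h : IsOcc m p η) :
    StrictMonoOn (colExt m p η) (Set.Iic (m.len + 1)) := by
  refine strictMonoOn_of_lt_add_one Set.ordConnected_Iic fun i _ _ hi => ?_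
  simp only [Set.mem_Iic] at hi
  unfold colExt
  split_ifs <;> first
    | contradiction
    | omega
    | exact (h.mem _ (by omega) (by omega)).1
    | exact h.mono i (i + 1) (by omega) (by omega) (by omega)
    | exact Nat.lt_succ_of_le (h.mem i (by omega) (by omega)).2

theorem valExt_strictMonoOn (h : IsOcc m p η) :
    StrictMonoOn (valExt m p η) (Set.Iic (m.len + 1)) := by
  refine strictMonoOn_of_lt_add_one Set.ordConnected_Iic fun j _ _ hj => ?_
  simp only [Set.mem_Iic] at hj
  unfold valExt
  split_ifs <;> first
    | contradiction
    | omega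
    | exact (h.perm_apply_pos_mem (by omega) (by omega)).1
    | exact Nat.lt_succ_of_le (h.perm_apply_pos_mem (by omega) (by omega)).2
    | obtain ⟨hp1, hp2, hp3⟩ := m.pos_spec (v := j) (by omega) (by omega)
      obtain ⟨hq1, hq2, hq3⟩ := m.pos_spec (v := j + 1) (by omega) (by omega)
      exact (h.pattern _ _ hp1 hp2 hq1 hq2).1 (by omega)

theorem corner_mem_sh (h : IsOcc m p η) {q : ℕ × ℕ} (hq : q ∈ m.sh) :
    (colExt m p η q.1, valExt m p η q.2) ∈ p.sh := by
  obtain ⟨hq1, hq2⟩ := m.sh_mem q hq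
  refine h.shaded q hq _ _ ⟨le_rfl, ?_, le_rfl, ?_⟩
  · exact h.colExt_strictMonoOn (Set.mem_Iic.mpr (by omega)) (Set.mem_Iic.mpr (by omega))
      (by omega)
  · exact h.valExt_strictMonoOn (Set.mem_Iic.mpr (by omega)) (Set.mem_Iic.mpr (by omega))
      (by omega)

theorem card_sh_le (h : IsOcc m p η) : m.sh.card ≤ p.sh.card := by
  refine Finset.card_le_card_of_injOn _ (fun q hq => h.corner_mem_sh hq) ?_
  intro q hq q' hq' heq
  obtain ⟨hq1, hq2⟩ := m.sh_mem q hq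
  obtain ⟨hq1', hq2'⟩ := m.sh_mem q' hq'
  simp only [Prod.mk.injEq] at heq
  have hmem : ∀ k, k ≤ m.len → k ∈ Set.Iic (m.len + 1) := fun k hk => Set.mem_Iic.mpr (by omega)
  exact Prod.ext (h.colExt_strictMonoOn.injOn (hmem _ hq1) (hmem _ hq1') heq.1)
    (h.valExt_strictMonoOn.injOn (hmem _ hq2) (hmem _ hq2') heq.2)

/-- The occurrence is then the identity map. -/
theorem eq_of_dim_le (h : IsOcc m p η) (hd : p.dim ≤ m.dim) : m = p := by
  have := h.len_le
  have := h.card_sh_le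
  unfold dim at hd
  have hlen : m.len = p.len := by omega
  have hid : ∀ i, 1 ≤ i → i ≤ m.len → η i = i := fun i => h.apply_eq_self hlen
  have hperm : m.perm = p.perm := perm_eq_of_lt_iff hlen fun i j hi1 hi2 hj1 hj2 => by
    simpa only [hid i hi1 hi2, hid j hj1 hj2] using h.pattern j i hj1 hj2 hi1 hi2
  have hcol : ∀ k, k ≤ m.len + 1 → colExt m p η k = k := by
    intro k hk
    unfold colExt
    split_ifs with h0 h1
    · exact h0.symm
    · exact hid k (by omega) h1
    · omega
  have hval : ∀ k, k ≤ m.len + 1 → valExt m p η k = k := by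
    intro k hk
    unfold valExt
    split_ifs with h0 h1
    · exact h0.symm
    · obtain ⟨hp1, hp2, hp3⟩ := m.pos_spec (v := k) (by omega) h1
      rw [hid _ hp1 hp2, ← hperm, hp3]
    · omega
  have hsub : m.sh ⊆ p.sh := by
    intro q hq
    obtain ⟨hq1, hq2⟩ := m.sh_mem q hq
    simpa only [hcol q.1 (by omega), hval q.2 (by omega)] using h.corner_mem_sh hq
  exact ext hlen hperm (Finset.eq_of_subset_of_card_le hsub (by omega))

end IsOcc

theorem dim_lt_of_le_of_ne {m p : MeshPattern} (hle : m ≤ p) (hne : m ≠ p) :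
    m.dim < p.dim := by
  obtain ⟨η, h⟩ := hle
  by_contra hd
  exact hne (h.eq_of_dim_le (by omega))

theorem eps0_le (p : MeshPattern) : eps0 ≤ p := by
  have hlen : eps0.len = 0 := rfl
  refine ⟨fun _ => 0, ⟨fun _ _ => rfl, ?_, ?_, ?_, fun q hq => absurd hq
    (Finset.notMem_empty q), fun q hq => absurd hq (Finset.notMem_empty q)⟩⟩ <;> intros <;> omega

theorem one0_le {p : MeshPattern} (hp : 1 ≤ p.len) : one0 ≤ p := by
  have hlen : one0.len = 1 := rfl
  refine ⟨fun i => if i = 1 then 1 else 0, ⟨?_, ?_, ?_, ?_, fun q hq => absurd hq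
    (Finset.notMem_empty q), fun q hq => absurd hq (Finset.notMem_empty q)⟩⟩
  · intro i hi
    rw [if_neg (by omega)]
  · intro i h1 h2
    obtain rfl : i = 1 := by omega
    simpa using hp
  · intros
    omega
  · intro i j h1 h2 h3 h4
    obtain rfl : i = 1 := by omega
    obtain rfl : j = 1 := by omega
    simp only [lt_self_iff_false]

theorem eq_eps0_of_dim_eq_zero {p : MeshPattern} (hp : p.dim = 0) : p = eps0 :=
  (IsOcc.eq_of_dim_le (eps0_le p).choose_spec (by omega)).symm

theorem eq_one0_or_eq_eps00_of_dim_eq_one {p : MeshPattern} (hp : p.dim = 1) :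
    p = one0 ∨ p = eps00 := by
  unfold dim at hp
  rcases Nat.eq_zero_or_pos p.len with h0 | h0
  · right
    obtain ⟨q, hq⟩ := Finset.card_eq_one.mp (show p.sh.card = 1 by omega)
    have : q = (0, 0) := Finset.mem_singleton.mp
      (sh_subset_singleton_of_len_eq_zero h0 (hq ▸ Finset.mem_singleton_self q))
    exact eq_of_len_eq_zero h0 rfl (by rw [hq, this]; rfl)
  · left
    exact (IsOcc.eq_of_dim_le (one0_le h0).choose_spec (show p.dim ≤ 1 by unfold dim; omega)).symm

/-- The box `(0,0)` of `ε` stretches over the whole of `p`, so `p` can have no points. -/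
theorem eq_eps00_of_eps00_le {p : MeshPattern} (hp : eps00 ≤ p) : p = eps00 := by
  obtain ⟨η, h⟩ := hp
  have hlen : p.len = 0 := by
    by_contra hpos
    refine h.no_point (0, 0) (Finset.mem_singleton_self _) 1 le_rfl (by omega) ?_
    have := p.perm_mem 1 le_rfl (by omega)
    show 0 < 1 ∧ 1 < p.len + 1 ∧ 0 < p.perm 1 ∧ p.perm 1 < p.len + 1
    omega
  exact (h.eq_of_dim_le (dim_le_one_of_len_eq_zero hlen)).symm

open Classical in
noncomputable def muEps0 (p : MeshPattern) : ℤ :=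
  if p = eps0 then 1 else if p.dim = 1 then -1 else 0

theorem muEps0_ne_zero {p : MeshPattern} (hp : muEps0 p ≠ 0) :
    p = eps0 ∨ p = one0 ∨ p = eps00 := by
  unfold muEps0 at hp
  split_ifs at hp with h0 h1
  · exact Or.inl h0
  · exact Or.inr (eq_one0_or_eq_eps00_of_dim_eq_one h1)
  · exact absurd rfl hp

theorem one0_ne_eps0 : one0 ≠ eps0 := fun h => one_ne_zero (congrArg len h)

theorem finsum_muEps0_of_lt {p : MeshPattern} (hp : p ≠ eps0) :
    ∑ᶠ d ∈ {d | eps0 ≤ d ∧ d ≤ p ∧ d ≠ p}, muEps0 d = -muEps0 p := by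
  have hpos : p.dim ≠ 0 := fun h => hp (eq_eps0_of_dim_eq_zero h)
  have hmu_eps0 : muEps0 eps0 = 1 := if_pos rfl
  have hmu_one0 : muEps0 one0 = -1 := (if_neg one0_ne_eps0).trans (if_pos rfl)
  rw [muEps0, if_neg hp]
  by_cases h1 : p.dim = 1
  · have hbelow : {d | eps0 ≤ d ∧ d ≤ p ∧ d ≠ p} = {eps0} := by
      ext d
      refine ⟨fun ⟨_, hdp, hne⟩ => eq_eps0_of_dim_eq_zero ?_, fun hd => ?_⟩
      · have := dim_lt_of_le_of_ne hdp hne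
        omega
      · rw [Set.mem_singleton_iff.mp hd]
        exact ⟨eps0_le _, eps0_le _, Ne.symm hp⟩
    rw [hbelow, finsum_mem_singleton, hmu_eps0, if_pos h1, neg_neg]
  · have hlen : 1 ≤ p.len := by
      by_contra h0
      have := dim_le_one_of_len_eq_zero (m := p) (by omega)
      omega
    have hsupp : {d | eps0 ≤ d ∧ d ≤ p ∧ d ≠ p} ∩ Function.support muEps0 = {eps0, one0} := by
      ext d
      simp only [Set.mem_inter_iff, Set.mem_ofPred_eq, Function.mem_support,
        Set.mem_insert_iff, Set.mem_singleton_iff]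
      constructor
      · rintro ⟨⟨-, hdp, -⟩, hd⟩
        rcases muEps0_ne_zero hd with rfl | rfl | rfl
        · exact Or.inl rfl
        · exact Or.inr rfl
        · exact absurd (congrArg dim (eq_eps00_of_eps00_le hdp)) h1
      · rintro (rfl | rfl)
        · exact ⟨⟨eps0_le _, eps0_le _, Ne.symm hp⟩, by rw [hmu_eps0]; decide⟩
        · refine ⟨⟨eps0_le _, one0_le hlen, fun h => h1 (h ▸ rfl)⟩, by rw [hmu_one0]; decide⟩
    rw [← finsum_mem_inter_support, hsupp, finsum_mem_pair one0_ne_eps0.symm, hmu_eps0,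
      hmu_one0, if_neg h1]
    norm_num

theorem muFuel_eps0 : ∀ (n : ℕ) {p : MeshPattern}, p.dim ≤ n →
    muFuel (· ≤ ·) n eps0 p = muEps0 p
  | 0, p, hp => by
    rw [eq_eps0_of_dim_eq_zero (Nat.le_zero.mp hp)]
    simp [muFuel, muEps0]
  | n + 1, p, hp => by
    by_cases h0 : p = eps0
    · subst h0
      simp [muFuel, muEps0]
    rw [muFuel, if_neg (Ne.symm h0), if_pos (eps0_le p), ← neg_neg (muEps0 p),
      ← finsum_muEps0_of_lt h0]
    refine congrArg _ (finsum_mem_congr rfl fun d ⟨_, hdp, hne⟩ => ?_)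
    exact muFuel_eps0 n (by have := dim_lt_of_le_of_ne hdp hne; omega)

open Classical in
/-- The Möbius function above the empty mesh patterns `ε^∅` and `ε^{(0,0)}`:
`μ(ε^A, p) = 1` if `p = ε^A`; `μ(ε^∅, p) = -1` if `|cl p| + |sh p| = 1`; and `0`
otherwise.  In particular `ε^{(0,0)}` is contained in no mesh pattern other than
itself. -/
theorem mu_of_empty_patterns :
    (∀ p : MeshPattern, eps0 ≤ p →
      mu eps0 p = if p = eps0 then 1 else if p.len + p.sh.card = 1 then -1 else 0) ∧
    (∀ p : MeshPattern, eps00 ≤ p → mu eps00 p = if p = eps00 then 1 else 0) ∧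
    (∀ p : MeshPattern, eps00 ≤ p → p = eps00) := by
  refine ⟨fun p _ => muFuel_eps0 _ (Nat.le_succ _), fun p hp => ?_,
    fun p hp => eq_eps00_of_eps00_le hp⟩
  obtain rfl := eq_eps00_of_eps00_le hp
  simp [mu, muFuel]

end MeshPattern
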